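/- arXiv:1606.07641 — 4 statements merged into one kernel-verified Lean document; each statement's English description precedes it below -/
import Mathlib

section
/- Fix ξ ∈ (−1,1). The glued profile U^ε(·;ξ) has one-sided derivatives at x = ξ, given by ∂ₓU^ε(ξ⁻;ξ) = −k₁(ε,ξ)/(√2 ε) and ∂ₓU^ε(ξ⁺;ξ) = −k₂(ε,ξ)/(√2 ε), so the jump of its derivative at ξ equals ⟦∂ₓU^ε⟧(ξ) := ∂ₓU^ε(ξ⁺;ξ) − ∂ₓU^ε(ξ⁻;ξ) = (k₁(ε,ξ) − k₂(ε,ξ))/(√2 ε); moreover there exist C > 0, c > 0 and ε₀ > 0 such that |⟦∂ₓU^ε⟧(ξ)| ≤ C·e^{−c/ε} for all ε ∈ (0, ε₀]. In particular the derivative jump tends to 0 as ε → 0⁺. -/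
/-!
Both branches of `U^ε` vanish at `ξ`, so each one-sided derivative at `ξ` is that of the
corresponding branch. Since `coth t - 1 = e^{-t} / sinh t ≤ e^{-t}` for `t ≥ 1`, both `k₁` and
`k₂` lie within `e^{-δ/(√2 ε)}` of `1`, where `δ = 1 - |ξ|`; half of this decay absorbs the
factor `1/(√2 ε)`, as `y e^{-y} ≤ 1`.
-/

noncomputable def coth (x : ℝ) : ℝ := Real.cosh x / Real.sinh x

open Real Filter Topology Set

lemma coth_sub_one_eq {t : ℝ} (ht : 0 < t) : coth t - 1 = exp (-t) / sinh t := by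
  rw [coth, div_sub_one (sinh_pos_iff.2 ht).ne', cosh_sub_sinh]

lemma abs_coth_sub_one_le {t : ℝ} (ht : 1 ≤ t) : |coth t - 1| ≤ exp (-t) := by
  have hsinh : 1 ≤ sinh t := ht.trans (self_le_sinh_iff.2 (by linarith))
  rw [coth_sub_one_eq (by linarith), abs_of_nonneg (div_nonneg (exp_pos _).le (by linarith))]
  exact div_le_self (exp_pos _).le hsinh

lemma abs_coth_sub_coth_le {s t : ℝ} (hs : 1 ≤ s) (ht : 1 ≤ t) :
    |coth s - coth t| ≤ exp (-s) + exp (-t) :=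
  calc |coth s - coth t| = |(coth s - 1) - (coth t - 1)| := by ring_nf
    _ ≤ |coth s - 1| + |coth t - 1| := abs_sub _ _
    _ ≤ exp (-s) + exp (-t) := add_le_add (abs_coth_sub_one_le hs) (abs_coth_sub_one_le ht)

lemma abs_coth_div_sub_coth_div_div_le {a b δ s : ℝ} (hs : 0 < s) (hsδ : s ≤ δ)
    (ha : δ ≤ a) (hb : δ ≤ b) :
    |(coth (a / s) - coth (b / s)) / s| ≤ 4 / δ * exp (-(δ / (2 * s))) := by
  have hδ : 0 < δ := hs.trans_le hsδ
  have hexp : ∀ x, δ ≤ x → exp (-(x / s)) ≤ exp (-(δ / s)) := fun x hx => by gcongr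
  have hcoth : |coth (a / s) - coth (b / s)| ≤ 2 * exp (-(δ / s)) :=
    (abs_coth_sub_coth_le ((one_le_div hs).2 (hsδ.trans ha))
      ((one_le_div hs).2 (hsδ.trans hb))).trans (by linarith [hexp a ha, hexp b hb])
  have hsplit : exp (-(δ / s)) = exp (-(δ / (2 * s))) * exp (-(δ / (2 * s))) := by
    rw [← exp_add]; ring_nf
  have hdecay : δ / (2 * s) * exp (-(δ / (2 * s))) ≤ 1 :=
    (mul_exp_neg_le_exp_neg_one _).trans (exp_le_one_iff.2 (by norm_num))
  rw [abs_div, abs_of_pos hs, div_le_iff₀ hs]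
  calc |coth (a / s) - coth (b / s)| ≤ 2 * exp (-(δ / s)) := hcoth
    _ = 4 / δ * exp (-(δ / (2 * s))) * (δ / (2 * s) * exp (-(δ / (2 * s)))) * s := by
      rw [hsplit]; field_simp; ring
    _ ≤ 4 / δ * exp (-(δ / (2 * s))) * 1 * s := by gcongr
    _ = 4 / δ * exp (-(δ / (2 * s))) * s := by ring

lemma tendsto_nhdsGT_zero_of_abs_le_mul_exp_neg_div {f : ℝ → ℝ} {C c ε₀ : ℝ} (hc : 0 < c)
    (hε₀ : 0 < ε₀) (hf : ∀ ε ∈ Ioc 0 ε₀, |f ε| ≤ C * exp (-c / ε)) :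
    Tendsto f (𝓝[>] 0) (𝓝 0) := by
  have hexp : Tendsto (fun ε => exp (-c / ε)) (𝓝[>] 0) (𝓝 0) := by
    have : Tendsto (fun ε : ℝ => -c / ε) (𝓝[>] 0) atBot := by
      simpa only [div_eq_mul_inv] using
        tendsto_inv_nhdsGT_zero.const_mul_atTop_of_neg (neg_neg_of_pos hc)
    exact tendsto_exp_atBot.comp this
  refine squeeze_zero_norm' ?_ (by simpa using hexp.const_mul C)
  filter_upwards [Ioc_mem_nhdsGT hε₀] with ε hε using hf ε hε

lemma hasDerivAt_tanh_zero : HasDerivAt tanh 1 0 := by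
  have h : HasDerivAt (fun x => sinh x / cosh x)
      ((cosh 0 * cosh 0 - sinh 0 * sinh 0) / cosh 0 ^ 2) 0 :=
    (hasDerivAt_sinh 0).div (hasDerivAt_cosh 0) (by simp)
  rw [show tanh = fun x => sinh x / cosh x from funext tanh_eq_sinh_div_cosh]
  simpa using h

lemma hasDerivAt_mul_tanh_sub_div (k ξ s : ℝ) :
    HasDerivAt (fun x => k * tanh ((ξ - x) / s)) (-k / s) ξ := by
  have hin : HasDerivAt (fun x => (ξ - x) / s) (-1 / s) ξ :=
    ((hasDerivAt_id ξ).const_sub ξ).div_const s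
  have htanh : HasDerivAt tanh 1 ((ξ - ξ) / s) := by simpa using hasDerivAt_tanh_zero
  exact ((htanh.comp ξ hin).const_mul k).congr_deriv
    (show k * (1 * (-1 / s)) = -k / s by ring)

section Glue

variable {f g : ℝ → ℝ} {a f' g' : ℝ}

lemma HasDerivAt.hasDerivWithinAt_ite_Iic (hf : HasDerivAt f f' a) :
    HasDerivWithinAt (fun x => if x ≤ a then f x else g x) f' (Iic a) a :=
  hf.hasDerivWithinAt.congr (fun _ hx => if_pos hx) (if_pos le_rfl)

lemma HasDerivAt.hasDerivWithinAt_ite_Ici (hg : HasDerivAt g g' a) (hfg : f a = g a) :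
    HasDerivWithinAt (fun x => if x ≤ a then f x else g x) g' (Ici a) a := by
  refine hg.hasDerivWithinAt.congr (fun x hx => ?_) (by simp [hfg])
  rcases (mem_Ici.1 hx).eq_or_lt with rfl | hlt
  · simp [hfg]
  · exact if_neg (not_le.2 hlt)

end Glue

/-- Fix `ξ ∈ (-1,1)`. The glued profile `U^ε(·;ξ)` has one-sided derivatives at `x = ξ`,
equal to `-k₁(ε)/(√2 ε)` from the left and `-k₂(ε)/(√2 ε)` from the right, so the jump
of the derivative at `ξ` equals `(k₁(ε) - k₂(ε))/(√2 ε)`; moreover there exist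
`C, c, ε₀ > 0` with `|jump| ≤ C e^{-c/ε}` for all `ε ∈ (0, ε₀]`, hence the jump tends
to `0` as `ε → 0⁺`. -/
theorem stmt_5 (ξ : ℝ) (hξ : ξ ∈ Set.Ioo (-1 : ℝ) 1)
    (k₁ k₂ : ℝ → ℝ)
    (hk₁ : ∀ ε : ℝ, k₁ ε = coth ((1 + ξ) / (Real.sqrt 2 * ε)))
    (hk₂ : ∀ ε : ℝ, k₂ ε = coth ((1 - ξ) / (Real.sqrt 2 * ε)))
    (U : ℝ → ℝ → ℝ)
    (hU : ∀ ε x, U ε x = if x ≤ ξ then k₁ ε * Real.tanh ((ξ - x) / (Real.sqrt 2 * ε))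
      else k₂ ε * Real.tanh ((ξ - x) / (Real.sqrt 2 * ε))) :
    (∀ ε : ℝ, 0 < ε →
      HasDerivWithinAt (U ε) (-(k₁ ε) / (Real.sqrt 2 * ε)) (Set.Iic ξ) ξ ∧
      HasDerivWithinAt (U ε) (-(k₂ ε) / (Real.sqrt 2 * ε)) (Set.Ici ξ) ξ ∧
      (-(k₂ ε) / (Real.sqrt 2 * ε)) - (-(k₁ ε) / (Real.sqrt 2 * ε))
        = (k₁ ε - k₂ ε) / (Real.sqrt 2 * ε)) ∧
    (∃ C > (0 : ℝ), ∃ c > (0 : ℝ), ∃ ε₀ > (0 : ℝ), ∀ ε ∈ Set.Ioc (0 : ℝ) ε₀,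
      |(k₁ ε - k₂ ε) / (Real.sqrt 2 * ε)| ≤ C * Real.exp (-c / ε)) ∧
    Filter.Tendsto (fun ε => (k₁ ε - k₂ ε) / (Real.sqrt 2 * ε))
      (nhdsWithin 0 (Set.Ioi 0)) (nhds 0) := by
  have hs2 : (0 : ℝ) < √2 := by positivity
  set δ := 1 - |ξ|
  have hδ : 0 < δ := by linarith [abs_lt.2 hξ]
  have hbound : ∀ ε ∈ Ioc (0 : ℝ) (δ / √2),
      |(k₁ ε - k₂ ε) / (√2 * ε)| ≤ 4 / δ * exp (-(δ / (2 * √2)) / ε) := by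
    rintro ε ⟨hε, hεδ⟩
    rw [hk₁, hk₂, neg_div, div_div, mul_assoc]
    exact abs_coth_div_sub_coth_div_div_le (by positivity) (by rwa [le_div_iff₀' hs2] at hεδ)
      (by linarith [neg_abs_le ξ]) (by linarith [le_abs_self ξ])
  refine ⟨fun ε _ => ?_, ⟨_, by positivity, _, by positivity, _, by positivity, hbound⟩,
    tendsto_nhdsGT_zero_of_abs_le_mul_exp_neg_div (by positivity) (by positivity) hbound⟩
  rw [show U ε = _ from funext (hU ε)]
  exact ⟨(hasDerivAt_mul_tanh_sub_div _ _ _).hasDerivWithinAt_ite_Iic,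
    (hasDerivAt_mul_tanh_sub_div _ _ _).hasDerivWithinAt_ite_Ici (by simp), by ring⟩
end

section
/- Fix ξ ∈ (−1,1). There exist constants C > 0, c > 0 and ε₀ > 0 such that for every ε ∈ (0, ε₀] and every x ∈ [−1,1] with x ≠ ξ, the pointwise residual of the glued profile satisfies |ε² ∂ₓ²U^ε(x;ξ) + U^ε(x;ξ) − U^ε(x;ξ)³| ≤ C·e^{−c/ε}, where ∂ₓ²U^ε denotes the classical second derivative of U^ε(·;ξ) on each of the two smooth pieces [−1,ξ) and (ξ,1]. -/
open Real

noncomputable def allenCahnResidual (ε : ℝ) (u : ℝ → ℝ) (x : ℝ) : ℝ :=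
  ε ^ 2 * deriv (deriv u) x + u x - u x ^ 3

theorem Real.hasDerivAt_tanh (y : ℝ) : HasDerivAt tanh (1 - tanh y ^ 2) y := by
  have h := (hasDerivAt_sinh y).div (hasDerivAt_cosh y) (cosh_pos y).ne'
  rw [show tanh = fun x => sinh x / cosh x from funext tanh_eq_sinh_div_cosh]
  refine h.congr_deriv ?_
  field_simp

theorem hasDerivAt_tanh_sub_div (ξ δ x : ℝ) :
    HasDerivAt (fun x => tanh ((ξ - x) / δ)) (-(1 - tanh ((ξ - x) / δ) ^ 2) / δ) x := by
  refine ((hasDerivAt_tanh _).comp x (((hasDerivAt_id x).const_sub ξ).div_const δ)).congr_deriv ?_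
  simp only [id]
  ring

theorem deriv_deriv_const_mul_tanh_sub_div (k ξ δ x : ℝ) :
    deriv (deriv fun x => k * tanh ((ξ - x) / δ)) x
      = -2 * k * tanh ((ξ - x) / δ) * (1 - tanh ((ξ - x) / δ) ^ 2) / δ ^ 2 := by
  have hderiv : deriv (fun x => k * tanh ((ξ - x) / δ))
      = fun x => -k * (1 - tanh ((ξ - x) / δ) ^ 2) / δ := by
    funext y
    rw [((hasDerivAt_tanh_sub_div ξ δ y).const_mul k).deriv]
    ring
  rw [hderiv]
  refine (((((hasDerivAt_tanh_sub_div ξ δ x).pow 2).const_sub 1).const_mul (-k)).div_const δ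
    |>.deriv).trans ?_
  push_cast
  ring

theorem allenCahnResidual_const_mul_tanh {ε : ℝ} (hε : ε ≠ 0) (k ξ x : ℝ) :
    allenCahnResidual ε (fun x => k * tanh ((ξ - x) / (√2 * ε))) x
      = k * (1 - k ^ 2) * tanh ((ξ - x) / (√2 * ε)) ^ 3 := by
  rw [allenCahnResidual, deriv_deriv_const_mul_tanh_sub_div, mul_pow, sq_sqrt zero_le_two]
  field_simp
  ring

theorem coth_mul_one_sub_coth_sq {a : ℝ} (ha : sinh a ≠ 0) :
    coth a * (1 - coth a ^ 2) = -(cosh a / sinh a ^ 3) := by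
  rw [coth]
  field_simp
  linear_combination (-1) * cosh_sq_sub_sinh_sq a

theorem cosh_div_sinh_pow_three_le {a : ℝ} (ha : 1 ≤ a) :
    cosh a / sinh a ^ 3 ≤ 64 * exp (-(2 * a)) := by
  have htwo : 2 ≤ exp a := by linarith [add_one_le_exp a]
  have hprod : exp a * exp (-a) = 1 := by rw [← exp_add, add_neg_cancel, exp_zero]
  have hsinh : exp a / 4 ≤ sinh a := by
    rw [sinh_eq]
    nlinarith [exp_pos (-a)]
  have hcosh : cosh a ≤ exp a := by
    rw [cosh_eq]
    nlinarith [exp_pos (-a)]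
  rw [exp_neg, two_mul, exp_add, div_le_iff₀ (pow_pos (sinh_pos_iff.2 (by linarith)) 3)]
  calc cosh a ≤ exp a := hcosh
    _ = 64 * (exp a * exp a)⁻¹ * (exp a / 4) ^ 3 := by field_simp; ring
    _ ≤ 64 * (exp a * exp a)⁻¹ * sinh a ^ 3 := by gcongr

theorem abs_allenCahnResidual_coth_mul_tanh_le {ε b : ℝ} (hε : 0 < ε) (hb : √2 * ε ≤ b)
    (ξ x : ℝ) :
    |allenCahnResidual ε (fun x => coth (b / (√2 * ε)) * tanh ((ξ - x) / (√2 * ε))) x|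
      ≤ 64 * exp (-b / ε) := by
  set a := b / (√2 * ε) with ha_def
  have ha : 1 ≤ a := (one_le_div₀ (by positivity)).2 hb
  have hexponent : -(2 * a) ≤ -b / ε := by
    have hb₀ : 0 ≤ b / ε := div_nonneg (by linarith [mul_pos (by positivity : 0 < √2) hε]) hε.le
    have h2a : 2 * a = √2 * (b / ε) := by
      rw [ha_def]
      field_simp
      rw [sq_sqrt zero_le_two, mul_comm]
    rw [neg_div, neg_le_neg_iff, h2a]
    exact le_mul_of_one_le_left hb₀ one_lt_sqrt_two.le
  have hsinh : sinh a ≠ 0 := (sinh_pos_iff.2 (by linarith)).ne'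
  rw [allenCahnResidual_const_mul_tanh hε.ne', abs_mul, coth_mul_one_sub_coth_sq hsinh, abs_neg,
    abs_of_pos (div_pos (cosh_pos a) (pow_pos (sinh_pos_iff.2 (by linarith)) 3))]
  calc cosh a / sinh a ^ 3 * |tanh ((ξ - x) / (√2 * ε)) ^ 3|
      ≤ cosh a / sinh a ^ 3 := by
        refine mul_le_of_le_one_right (by positivity) ?_
        rw [abs_pow]
        exact pow_le_one₀ (abs_nonneg _) (abs_tanh_lt_one _).le
    _ ≤ 64 * exp (-(2 * a)) := cosh_div_sinh_pow_three_le ha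
    _ ≤ 64 * exp (-b / ε) := by gcongr

/-- Fix `ξ ∈ (-1,1)`. There exist `C, c, ε₀ > 0` such that for every `ε ∈ (0, ε₀]` and
every `x ∈ [-1,1]` with `x ≠ ξ`, the pointwise residual of the glued profile satisfies
`|ε² ∂ₓ²U^ε + U^ε - (U^ε)³| ≤ C e^{-c/ε}`, where the second derivative is the classical
one on each of the two smooth pieces `[-1,ξ)` and `(ξ,1]` (represented by the globally
smooth functions `U₁, U₂` which coincide with `U^ε` there). -/
theorem stmt_6 (ξ : ℝ) (hξ : ξ ∈ Set.Ioo (-1 : ℝ) 1)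
    (k₁ k₂ : ℝ → ℝ)
    (hk₁ : ∀ ε : ℝ, k₁ ε = coth ((1 + ξ) / (Real.sqrt 2 * ε)))
    (hk₂ : ∀ ε : ℝ, k₂ ε = coth ((1 - ξ) / (Real.sqrt 2 * ε)))
    (U₁ U₂ : ℝ → ℝ → ℝ)
    (hU₁ : ∀ ε x, U₁ ε x = k₁ ε * Real.tanh ((ξ - x) / (Real.sqrt 2 * ε)))
    (hU₂ : ∀ ε x, U₂ ε x = k₂ ε * Real.tanh ((ξ - x) / (Real.sqrt 2 * ε))) :
    ∃ C > (0 : ℝ), ∃ c > (0 : ℝ), ∃ ε₀ > (0 : ℝ), ∀ ε ∈ Set.Ioc (0 : ℝ) ε₀,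
      (∀ x ∈ Set.Ico (-1 : ℝ) ξ,
        |ε ^ 2 * deriv (deriv (U₁ ε)) x + U₁ ε x - (U₁ ε x) ^ 3|
          ≤ C * Real.exp (-c / ε)) ∧
      (∀ x ∈ Set.Ioc ξ (1 : ℝ),
        |ε ^ 2 * deriv (deriv (U₂ ε)) x + U₂ ε x - (U₂ ε x) ^ 3|
          ≤ C * Real.exp (-c / ε)) := by
  obtain ⟨hξ₁, hξ₂⟩ := hξ
  set m := min (1 + ξ) (1 - ξ)
  have hm : 0 < m := lt_min (by linarith) (by linarith)
  refine ⟨64, by norm_num, m, hm, m / √2, by positivity, ?_⟩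
  rintro ε ⟨hε, hεm⟩
  have hsqrt2ε : √2 * ε ≤ m := (le_div_iff₀' (by positivity)).1 hεm
  have hpiece : ∀ b, m ≤ b → ∀ x,
      |allenCahnResidual ε (fun x => coth (b / (√2 * ε)) * tanh ((ξ - x) / (√2 * ε))) x|
        ≤ 64 * exp (-m / ε) := fun b hb x =>
    (abs_allenCahnResidual_coth_mul_tanh_le hε (hsqrt2ε.trans hb) ξ x).trans (by gcongr)
  refine ⟨fun x _ => ?_, fun x _ => ?_⟩
  · rw [show U₁ ε = _ from funext fun x => (hU₁ ε x).trans (by rw [hk₁])]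
    exact hpiece _ (min_le_left _ _) x
  · rw [show U₂ ε = _ from funext fun x => (hU₂ ε x).trans (by rw [hk₂])]
    exact hpiece _ (min_le_right _ _) x
end

section
/- Let J ⊆ ℝ be an interval, ξ̄ ∈ J, β > 0, and θ : J → ℝ a function satisfying (ξ − ξ̄)·θ(ξ) ≤ −β·(ξ − ξ̄)² for every ξ ∈ J. Let δ ≥ 0 and γ > 0, let r, ρ : [0,∞) → ℝ be continuous with |r(t)| ≤ 1/2 and |ρ(t)| ≤ δ·e^{−γt} for all t ≥ 0, and let ξ : [0,∞) → J be differentiable with ξ'(t) = θ(ξ(t))·(1 + r(t)) + ρ(t) for all t ≥ 0. Then for every t ≥ 0, |ξ(t) − ξ̄| ≤ |ξ(0) − ξ̄|·e^{−βt/2} + δ·t·e^{−min(γ, β/2)·t}. In particular ξ(t) converges exponentially fast to ξ̄ as t → ∞. -/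
/-!
Along the trajectory, `v = ξ - ξ̄` satisfies `v v' ≤ -(β/2) v² + |v| δ e^{-γt}`: the factor
`1 + r ≥ 1/2` halves the dissipation at worst, and the forcing is at most `|v| |ρ|`. Hence `|v|`
cannot cross the barrier `B = |v(0)| e^{-βt/2} + δ t e^{-mt} + ε`, `m = min(γ, β/2)`, which satisfies the strict
inequality `B' > -(β/2) B + δ e^{-mt}`. Letting `ε → 0` gives the estimate.
-/

open Set Real

theorem abs_le_of_mul_deriv_right_lt_mul_deriv_boundary {v v' B B' : ℝ → ℝ} {a b : ℝ}
    (hv : ContinuousOn v (Icc a b)) (hv' : ∀ x ∈ Ico a b, HasDerivWithinAt v (v' x) (Ici x) x)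
    (ha : |v a| ≤ B a) (hB : ∀ x, HasDerivAt B (B' x) x) (hB0 : ∀ x ∈ Icc a b, 0 ≤ B x)
    (bound : ∀ x ∈ Ico a b, |v x| = B x → v x * v' x < B x * B' x) :
    ∀ ⦃x⦄, x ∈ Icc a b → |v x| ≤ B x := by
  intro x hx
  refine abs_le_of_sq_le_sq ?_ (hB0 x hx)
  refine image_le_of_deriv_right_lt_deriv_boundary (f := fun x => v x ^ 2)
    (f' := fun x => 2 * v x * v' x) (B := fun x => B x ^ 2) (B' := fun x => 2 * B x * B' x)
    (hv.pow 2) (fun x hx => by simpa using (hv' x hx).fun_pow 2)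
    (sq_le_sq.2 (ha.trans (le_abs_self _))) (fun x => by simpa using (hB x).fun_pow 2) ?_ hx
  intro y hy hcontact
  have hvB : |v y| = B y :=
    ((sq_eq_sq_iff_abs_eq_abs _ _).1 hcontact).trans
      (abs_of_nonneg (hB0 y (Ico_subset_Icc_self hy)))
  linarith [bound y hy hvB]

theorem mul_perturbed_drift_le {v θ r ρ β D : ℝ} (hβ : 0 ≤ β) (hθ : v * θ ≤ -β * v ^ 2)
    (hr : |r| ≤ 1 / 2) (hρ : |ρ| ≤ D) :
    v * (θ * (1 + r) + ρ) ≤ -(β / 2) * v ^ 2 + |v| * D := by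
  have hvθ : v * θ ≤ 0 := hθ.trans (by nlinarith [sq_nonneg v])
  have hdrift : v * θ * (1 + r) ≤ v * θ * (1 / 2) :=
    mul_le_mul_of_nonpos_left (by linarith [(abs_le.1 hr).1]) hvθ
  have hforce : v * ρ ≤ |v| * D := calc
    v * ρ ≤ |v| * |ρ| := (le_abs_self _).trans_eq (abs_mul v ρ)
    _ ≤ |v| * D := mul_le_mul_of_nonneg_left hρ (abs_nonneg v)
  linarith

noncomputable def decayBarrier (a κ δ m ε x : ℝ) : ℝ :=
  a * exp (-κ * x) + δ * x * exp (-m * x) + ε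

section decayBarrier

variable {a κ δ m ε : ℝ}

theorem hasDerivAt_decayBarrier (x : ℝ) :
    HasDerivAt (decayBarrier a κ δ m ε)
      (-κ * (a * exp (-κ * x)) + δ * exp (-m * x) - m * (δ * x * exp (-m * x))) x := by
  have hlin (c : ℝ) : HasDerivAt (fun y : ℝ => c * y) c x :=
    ((hasDerivAt_id x).const_mul c).congr_deriv (mul_one c)
  exact ((((hlin (-κ)).exp.const_mul a).add ((hlin δ).mul (hlin (-m)).exp)).add_const ε).congr_deriv
    (by ring)

theorem decayBarrier_pos (ha : 0 ≤ a) (hδ : 0 ≤ δ) (hε : 0 < ε) {x : ℝ} (hx : 0 ≤ x) :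
    0 < decayBarrier a κ δ m ε x := by
  unfold decayBarrier
  positivity

theorem lt_deriv_decayBarrier (hκ : 0 < κ) (hm : m ≤ κ) (hδ : 0 ≤ δ) (hε : 0 < ε) {x : ℝ}
    (hx : 0 ≤ x) :
    -κ * decayBarrier a κ δ m ε x + δ * exp (-m * x) < deriv (decayBarrier a κ δ m ε) x := by
  rw [(hasDerivAt_decayBarrier x).deriv, decayBarrier]
  have : 0 ≤ (κ - m) * (δ * x * exp (-m * x)) :=
    mul_nonneg (sub_nonneg.2 hm) (by positivity)
  nlinarith [mul_pos hκ hε]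

end decayBarrier

theorem stmt_15_general (J : Set ℝ) (ξbar : ℝ)
    (β : ℝ) (hβ : 0 < β) (θ : ℝ → ℝ)
    (hθ : ∀ ζ ∈ J, (ζ - ξbar) * θ ζ ≤ -β * (ζ - ξbar) ^ 2)
    (δ γ : ℝ) (hδ : 0 ≤ δ)
    (r ρ : ℝ → ℝ)
    (hr : ∀ t : ℝ, 0 ≤ t → |r t| ≤ 1 / 2)
    (hρ : ∀ t : ℝ, 0 ≤ t → |ρ t| ≤ δ * Real.exp (-γ * t))
    (ξ : ℝ → ℝ) (hmem : ∀ t : ℝ, 0 ≤ t → ξ t ∈ J)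
    (hode : ∀ t : ℝ, 0 ≤ t →
      HasDerivWithinAt ξ (θ (ξ t) * (1 + r t) + ρ t) (Set.Ici 0) t) :
    ∀ t : ℝ, 0 ≤ t →
      |ξ t - ξbar| ≤ |ξ 0 - ξbar| * Real.exp (-(β / 2) * t)
        + δ * t * Real.exp (-(min γ (β / 2)) * t) := by
  intro t ht
  refine le_of_forall_pos_le_add fun ε hε => ?_
  set m := min γ (β / 2)
  set B := decayBarrier |ξ 0 - ξbar| (β / 2) δ m ε
  have hBpos : ∀ x, 0 ≤ x → 0 < B x := fun x hx => decayBarrier_pos (abs_nonneg _) hδ hε hx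
  have hforcing : ∀ x, 0 ≤ x → |ρ x| ≤ δ * exp (-m * x) := fun x hx =>
    (hρ x hx).trans (by gcongr; exact min_le_left _ _)
  refine abs_le_of_mul_deriv_right_lt_mul_deriv_boundary (v := fun x => ξ x - ξbar)
    (fun x hx => ((hode x hx.1).continuousWithinAt.mono Icc_subset_Ici_self).sub_const ξbar)
    (fun x hx => ((hode x hx.1).mono (Ici_subset_Ici.2 hx.1)).sub_const ξbar)
    (by simpa [B, decayBarrier] using hε.le)
    (fun x => (hasDerivAt_decayBarrier x).differentiableAt.hasDerivAt)
    (fun x hx => (hBpos x hx.1).le) ?_ (right_mem_Icc.2 ht)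
  intro x hx hcontact
  calc (ξ x - ξbar) * (θ (ξ x) * (1 + r x) + ρ x)
      ≤ -(β / 2) * (ξ x - ξbar) ^ 2 + |ξ x - ξbar| * (δ * exp (-m * x)) :=
        mul_perturbed_drift_le hβ.le (hθ _ (hmem x hx.1)) (hr x hx.1) (hforcing x hx.1)
    _ = B x * (-(β / 2) * B x + δ * exp (-m * x)) := by rw [← sq_abs, hcontact]; ring
    _ < B x * deriv B x := mul_lt_mul_of_pos_left
        (lt_deriv_decayBarrier (by positivity) (min_le_right _ _) hδ hε hx.1) (hBpos x hx.1)

/-- Perturbed interface equation: let `J ⊆ ℝ` be an interval, `ξ̄ ∈ J`, `β > 0`, and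
`θ` satisfy `(ξ - ξ̄) θ(ξ) ≤ -β (ξ - ξ̄)²` on `J`. Let `δ ≥ 0`, `γ > 0`, and let
`r, ρ : [0,∞) → ℝ` be continuous with `|r| ≤ 1/2` and `|ρ(t)| ≤ δ e^{-γ t}`. If
`ξ : [0,∞) → J` is differentiable with `ξ' = θ(ξ)(1 + r) + ρ`, then for all `t ≥ 0`,
`|ξ(t) - ξ̄| ≤ |ξ(0) - ξ̄| e^{-βt/2} + δ t e^{-min(γ, β/2) t}`; in particular `ξ(t)`
converges exponentially fast to `ξ̄`. -/
theorem stmt_15 (J : Set ℝ) (hJ : J.OrdConnected) (ξbar : ℝ) (hξbar : ξbar ∈ J)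
    (β : ℝ) (hβ : 0 < β) (θ : ℝ → ℝ)
    (hθ : ∀ ζ ∈ J, (ζ - ξbar) * θ ζ ≤ -β * (ζ - ξbar) ^ 2)
    (δ γ : ℝ) (hδ : 0 ≤ δ) (hγ : 0 < γ)
    (r ρ : ℝ → ℝ)
    (hrc : ContinuousOn r (Set.Ici 0)) (hρc : ContinuousOn ρ (Set.Ici 0))
    (hr : ∀ t : ℝ, 0 ≤ t → |r t| ≤ 1 / 2)
    (hρ : ∀ t : ℝ, 0 ≤ t → |ρ t| ≤ δ * Real.exp (-γ * t))
    (ξ : ℝ → ℝ) (hmem : ∀ t : ℝ, 0 ≤ t → ξ t ∈ J)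
    (hode : ∀ t : ℝ, 0 ≤ t →
      HasDerivWithinAt ξ (θ (ξ t) * (1 + r t) + ρ t) (Set.Ici 0) t) :
    ∀ t : ℝ, 0 ≤ t →
      |ξ t - ξbar| ≤ |ξ 0 - ξbar| * Real.exp (-(β / 2) * t)
        + δ * t * Real.exp (-(min γ (β / 2)) * t) :=
  stmt_15_general J ξbar β hβ θ hθ δ γ hδ r ρ hr hρ ξ hmem hode
end

section
/- Let H be a real Hilbert space with inner product ⟨·,·⟩ and let T > 0. Let ξ : [0,T] → ℝ and v : [0,T] → H be differentiable, let Ψ : ℝ → H and U : ℝ → H be continuously differentiable, and let w, F, Q : [0,T] → H be continuous functions such that for all t ∈ [0,T]: (i) v'(t) = w(t) + F(t) − ξ'(t)·U'(ξ(t)) + Q(t); (ii) ⟨Ψ(ξ(t)), w(t)⟩ = 0; (iii) ⟨Ψ(ξ(t)), v(t)⟩ = 0. Then for every t ∈ [0,T] the interface equation ( ⟨Ψ(ξ(t)), U'(ξ(t))⟩ − ⟨Ψ'(ξ(t)), v(t)⟩ )·ξ'(t) = ⟨Ψ(ξ(t)), F(t) + Q(t)⟩ holds. -/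
/-!
Differentiating the constraint `⟪Ψ (ξ t), v t⟫ = 0` in `t` gives
`⟪Ψ (ξ), v'⟫ + ξ' ⟪Ψ' (ξ), v⟫ = 0`; substituting the equation for `v'`, the `w`-term drops out
by orthogonality and what remains is the interface equation.
-/

open scoped RealInnerProductSpace

section

variable {E : Type*} [NormedAddCommGroup E] [NormedSpace ℝ E]

theorem HasDerivWithinAt.eq_zero_of_eqOn_zero {f : ℝ → E} {f' : E} {s : Set ℝ} {t : ℝ}
    (hf : HasDerivWithinAt f f' s t) (hs : UniqueDiffWithinAt ℝ s t) (ht : t ∈ s)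
    (h : Set.EqOn f 0 s) : f' = 0 :=
  hs.eq_deriv s hf <| (hasDerivWithinAt_const t s 0).congr h (h ht)

variable {H : Type*} [NormedAddCommGroup H] [InnerProductSpace ℝ H]

theorem inner_hasDerivWithinAt_eq_zero_of_inner_eq_zero {Ψ v : ℝ → H} {ξ : ℝ → ℝ}
    {Ψ' v' : H} {ξ' : ℝ} {s : Set ℝ} {t : ℝ}
    (hs : UniqueDiffWithinAt ℝ s t) (ht : t ∈ s)
    (hΨ : HasDerivAt Ψ Ψ' (ξ t)) (hξ : HasDerivWithinAt ξ ξ' s t)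
    (hv : HasDerivWithinAt v v' s t) (h : ∀ r ∈ s, ⟪Ψ (ξ r), v r⟫ = 0) :
    ⟪Ψ (ξ t), v'⟫ + ξ' * ⟪Ψ', v t⟫ = 0 := by
  have hderiv : HasDerivWithinAt (fun r => ⟪Ψ (ξ r), v r⟫)
      (⟪Ψ (ξ t), v'⟫ + ⟪ξ' • Ψ', v t⟫) s t :=
    (hΨ.scomp_hasDerivWithinAt t hξ).inner ℝ hv
  rw [← real_inner_smul_left]
  exact hderiv.eq_zero_of_eqOn_zero hs ht h

end

theorem stmt_16_general {H : Type*} [NormedAddCommGroup H] [InnerProductSpace ℝ H]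
    (T : ℝ) (hT : 0 < T)
    (ξ ξ' : ℝ → ℝ) (v : ℝ → H) (Ψ Ψ' U' : ℝ → H)
    (hΨ : ∀ s : ℝ, HasDerivAt Ψ (Ψ' s) s)
    (hξ : ∀ t ∈ Set.Icc (0 : ℝ) T, HasDerivWithinAt ξ (ξ' t) (Set.Icc 0 T) t)
    (w F Q : ℝ → H)
    (hv : ∀ t ∈ Set.Icc (0 : ℝ) T,
      HasDerivWithinAt v (w t + F t - ξ' t • U' (ξ t) + Q t) (Set.Icc 0 T) t)
    (horth : ∀ t ∈ Set.Icc (0 : ℝ) T, (inner ℝ (Ψ (ξ t)) (w t) : ℝ) = 0)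
    (hconstr : ∀ t ∈ Set.Icc (0 : ℝ) T, (inner ℝ (Ψ (ξ t)) (v t) : ℝ) = 0) :
    ∀ t ∈ Set.Icc (0 : ℝ) T,
      ((inner ℝ (Ψ (ξ t)) (U' (ξ t)) : ℝ) - (inner ℝ (Ψ' (ξ t)) (v t) : ℝ)) * ξ' t
        = (inner ℝ (Ψ (ξ t)) (F t + Q t) : ℝ) := by
  intro t ht
  have hconstr' := inner_hasDerivWithinAt_eq_zero_of_inner_eq_zero
    (uniqueDiffOn_Icc hT t ht) ht (hΨ (ξ t)) (hξ t ht) (hv t ht) hconstr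
  rw [inner_add_right, inner_sub_right, inner_add_right, horth t ht,
    real_inner_smul_right] at hconstr'
  rw [inner_add_right]
  linarith

/-- Derivation of the interface equation by the projection method: in a real Hilbert
space `H`, if `v' = w + F - ξ' • U'(ξ) + Q` on `[0,T]`, `⟨Ψ(ξ(t)), w(t)⟩ = 0` and
`⟨Ψ(ξ(t)), v(t)⟩ = 0` on `[0,T]`, with `Ψ, U : ℝ → H` continuously differentiable, then
`(⟨Ψ(ξ), U'(ξ)⟩ - ⟨Ψ'(ξ), v⟩) ξ' = ⟨Ψ(ξ), F + Q⟩` on `[0,T]`. -/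
theorem stmt_16 {H : Type*} [NormedAddCommGroup H] [InnerProductSpace ℝ H]
    [CompleteSpace H]
    (T : ℝ) (hT : 0 < T)
    (ξ ξ' : ℝ → ℝ) (v : ℝ → H) (Ψ Ψ' U U' : ℝ → H)
    (hΨ : ∀ s : ℝ, HasDerivAt Ψ (Ψ' s) s) (hΨ'c : Continuous Ψ')
    (hUd : ∀ s : ℝ, HasDerivAt U (U' s) s) (hU'c : Continuous U')
    (hξ : ∀ t ∈ Set.Icc (0 : ℝ) T, HasDerivWithinAt ξ (ξ' t) (Set.Icc 0 T) t)
    (w F Q : ℝ → H)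
    (hwc : ContinuousOn w (Set.Icc 0 T)) (hFc : ContinuousOn F (Set.Icc 0 T))
    (hQc : ContinuousOn Q (Set.Icc 0 T))
    (hv : ∀ t ∈ Set.Icc (0 : ℝ) T,
      HasDerivWithinAt v (w t + F t - ξ' t • U' (ξ t) + Q t) (Set.Icc 0 T) t)
    (horth : ∀ t ∈ Set.Icc (0 : ℝ) T, (inner ℝ (Ψ (ξ t)) (w t) : ℝ) = 0)
    (hconstr : ∀ t ∈ Set.Icc (0 : ℝ) T, (inner ℝ (Ψ (ξ t)) (v t) : ℝ) = 0) :
    ∀ t ∈ Set.Icc (0 : ℝ) T,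
      ((inner ℝ (Ψ (ξ t)) (U' (ξ t)) : ℝ) - (inner ℝ (Ψ' (ξ t)) (v t) : ℝ)) * ξ' t
        = (inner ℝ (Ψ (ξ t)) (F t + Q t) : ℝ) :=
  stmt_16_general T hT ξ ξ' v Ψ Ψ' U' hΨ hξ w F Q hv horth hconstr
end
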